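/- arXiv:1705.02898 — 6 statements merged into one kernel-verified Lean document; each statement's English description precedes it below -/
import Mathlib

section
/- Let Y, Y₀, Y₁, Y₂ be nonempty bounded subsets of ℝ^d with Y = Y₀ ∪ Y₁ ∪ Y₂, Y₀ ∩ Y₁ ≠ ∅ and Y₀ ∩ Y₂ ≠ ∅. Then max(diam Y₀, diam Y₁, diam Y₂) ≥ diam(Y)/3. -/
theorem three_sets_diam_lower_bound {d : ℕ}
    (Y Y₀ Y₁ Y₂ : Set (EuclideanSpace ℝ (Fin d)))
    (hY₀ : Y₀.Nonempty) (hY₁ : Y₁.Nonempty) (hY₂ : Y₂.Nonempty)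
    (hbY : Bornology.IsBounded Y) (hb0 : Bornology.IsBounded Y₀)
    (hb1 : Bornology.IsBounded Y₁) (hb2 : Bornology.IsBounded Y₂)
    (hU : Y = Y₀ ∪ Y₁ ∪ Y₂)
    (h01 : (Y₀ ∩ Y₁).Nonempty) (h02 : (Y₀ ∩ Y₂).Nonempty) :
    Metric.diam Y / 3 ≤ max (Metric.diam Y₀) (max (Metric.diam Y₁) (Metric.diam Y₂)) := by
  obtain ⟨p, hp0, hp1⟩ := h01
  obtain ⟨q, hq0, hq2⟩ := h02
  set M := max (Metric.diam Y₀) (max (Metric.diam Y₁) (Metric.diam Y₂)) with hM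
  have hM0 : (0:ℝ) ≤ M := le_trans Metric.diam_nonneg (le_max_left _ _)
  have d0 : ∀ a ∈ Y₀, ∀ b ∈ Y₀, dist a b ≤ M := fun a ha b hb =>
    (Metric.dist_le_diam_of_mem hb0 ha hb).trans (le_max_left _ _)
  have d1 : ∀ a ∈ Y₁, ∀ b ∈ Y₁, dist a b ≤ M := fun a ha b hb =>
    (Metric.dist_le_diam_of_mem hb1 ha hb).trans ((le_max_left _ _).trans (le_max_right _ _))
  have d2 : ∀ a ∈ Y₂, ∀ b ∈ Y₂, dist a b ≤ M := fun a ha b hb =>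
    (Metric.dist_le_diam_of_mem hb2 ha hb).trans ((le_max_right _ _).trans (le_max_right _ _))
  have key : Metric.diam Y ≤ 3 * M := by
    apply Metric.diam_le_of_forall_dist_le (by positivity)
    intro x hx y hy
    rw [hU] at hx hy
    rcases hx with (hx | hx) | hx <;> rcases hy with (hy | hy) | hy
    · linarith [d0 x hx y hy]
    · have := dist_triangle x p y
      linarith [d0 x hx p hp0, d1 p hp1 y hy]
    · have := dist_triangle x q y
      linarith [d0 x hx q hq0, d2 q hq2 y hy]
    · have := dist_triangle x p y
      linarith [d1 x hx p hp1, d0 p hp0 y hy]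
    · linarith [d1 x hx y hy]
    · have := dist_triangle4 x p q y
      linarith [d1 x hx p hp1, d0 p hp0 q hq0, d2 q hq2 y hy]
    · have := dist_triangle x q y
      linarith [d2 x hx q hq2, d0 q hq0 y hy]
    · have := dist_triangle4 x q p y
      linarith [d2 x hx q hq2, d0 q hq0 p hp0, d1 p hp1 y hy]
    · linarith [d2 x hx y hy]
  linarith
end

section
/- Let Y be a nonempty bounded subset of ℝ^d written as a finite union Y = Y₁ ∪ ⋯ ∪ Y_n (n ≥ 2) of nonempty sets that pairwise intersect (Y_i ∩ Y_j ≠ ∅ for all i, j), and suppose there exist indices k, k' with diam(Y_k ∪ Y_{k'}) = diam(Y). Then max_i diam(Y_i) ≥ diam(Y)/2. -/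
theorem pairwise_intersecting_union_diam_half {d n : ℕ} (hn : 2 ≤ n)
    (Y : Set (EuclideanSpace ℝ (Fin d))) (Ys : Fin n → Set (EuclideanSpace ℝ (Fin d)))
    (hYne : Y.Nonempty) (hYb : Bornology.IsBounded Y)
    (hne : ∀ i, (Ys i).Nonempty)
    (hU : Y = ⋃ i, Ys i)
    (hpair : ∀ i j, (Ys i ∩ Ys j).Nonempty)
    (hkk' : ∃ k k', Metric.diam (Ys k ∪ Ys k') = Metric.diam Y) :
    ∃ i, Metric.diam Y / 2 ≤ Metric.diam (Ys i) := by
  obtain ⟨k, k', hd⟩ := hkk'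
  have h := Metric.diam_union' (hpair k k')
  rw [hd] at h
  rcases le_total (Metric.diam (Ys k)) (Metric.diam (Ys k')) with hle | hle
  · exact ⟨k', by linarith⟩
  · exact ⟨k, by linarith⟩
end

section
/- Consider n real values y¹, …, yⁿ and an update where each agent i sets its new value to (mᵢ + Mᵢ)/2, where mᵢ = min over a set Sᵢ ⊆ {1,…,n} with i ∈ Sᵢ of y^j and Mᵢ = max over Sᵢ of y^j. If the sets Sᵢ pairwise intersect (for all i, j there is k ∈ Sᵢ ∩ Sⱼ), then the diameter of the new values is at most half the diameter of the old values: max_{i,j} |y'^i − y'^j| ≤ (1/2) max_{i,j} |y^i − y^j|. -/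
theorem midpoint_update_contracts {n : ℕ} (y : Fin n → ℝ)
    (S : Fin n → Finset (Fin n)) (hself : ∀ i, i ∈ S i)
    (hsplit : ∀ i j, ∃ k, k ∈ S i ∧ k ∈ S j)
    (y' : Fin n → ℝ)
    (hy' : ∀ i, y' i =
      (((S i).image y).min' (Finset.Nonempty.image ⟨i, hself i⟩ y) +
       ((S i).image y).max' (Finset.Nonempty.image ⟨i, hself i⟩ y)) / 2) :
    ∀ i j, |y' i - y' j| ≤ (1 / 2) * ⨆ p : Fin n × Fin n, |y p.1 - y p.2| := by
  intro i j
  set D := ⨆ p : Fin n × Fin n, |y p.1 - y p.2| with hD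
  have hbdd : BddAbove (Set.range fun p : Fin n × Fin n => |y p.1 - y p.2|) :=
    Set.Finite.bddAbove (Set.finite_range _)
  have hle : ∀ a b : Fin n, y a - y b ≤ D := fun a b =>
    (le_abs_self _).trans (le_ciSup hbdd (a, b))
  have hne : ∀ i, ((S i).image y).Nonempty := fun i =>
    ⟨y i, Finset.mem_image_of_mem y (hself i)⟩
  have key : ∀ i j : Fin n, y' i - y' j ≤ (1 / 2) * D := by
    intro i j
    obtain ⟨k, hki, hkj⟩ := hsplit i j
    rw [hy' i, hy' j]
    obtain ⟨a, ha, hay⟩ := Finset.mem_image.mp (((S i).image y).max'_mem (hne i))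
    obtain ⟨b, hb, hby⟩ := Finset.mem_image.mp (((S j).image y).min'_mem (hne j))
    have h1 : ((S i).image y).max' (hne i) - ((S j).image y).min' (hne j) ≤ D := by
      rw [← hay, ← hby]; exact hle a b
    have h2 : ((S i).image y).min' (hne i) ≤ y k :=
      Finset.min'_le _ _ (Finset.mem_image_of_mem y hki)
    have h3 : y k ≤ ((S j).image y).max' (hne j) :=
      Finset.le_max' _ _ (Finset.mem_image_of_mem y hkj)
    linarith
  have h1 := key i j
  have h2 := key j i
  rw [abs_sub_le_iff]
  constructor <;> linarith
end

section
/- Any product of n − 1 rooted directed graphs on n vertices (each with all self-loops) is non-split: if G₁, …, G_{n−1} each contain a rooted spanning tree, then in G₁ ∘ G₂ ∘ ⋯ ∘ G_{n−1}, any two vertices have a common in-neighbor. -/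
/-!
Follow the in-neighbourhoods `Iᵢ`, `Iⱼ` of two vertices `i ≠ j` as the graphs are multiplied
on from the left, one at a time. Self-loops make both sets grow monotonically, so as long as
they stay disjoint they were disjoint before. The root of the new graph lies outside one of
them, say `Iᵢ`, and its path into `Iᵢ` enters through an edge `a → b` with `a ∉ Iᵢ`; then `a`
is a new in-neighbour of `i`, and it is not in `Iⱼ` either, since `Iⱼ` only grows. Hence each
factor enlarges `Iᵢ ∪ Iⱼ`, which starts with two elements, so after `n - 1` factors the two
sets would have to cover `n + 1` vertices.
-/

/-- Product of two directed graphs (as relations). -/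
def graphProd {n : ℕ} (G H : Fin n → Fin n → Prop) : Fin n → Fin n → Prop :=
  fun i j => ∃ k, G i k ∧ H k j

/-- Product of a list of graphs (identity relation for the empty list). -/
def listProd {n : ℕ} (l : List (Fin n → Fin n → Prop)) : Fin n → Fin n → Prop :=
  l.foldr graphProd (fun i j => i = j)

/-- A graph is rooted if some vertex has a directed path to every vertex. -/
def Rooted {n : ℕ} (G : Fin n → Fin n → Prop) : Prop :=
  ∃ r, ∀ v, Relation.ReflTransGen G r v

open Relation

section PredSet

variable {α : Type*} {G : α → α → Prop} {S T : Set α}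

def predSet (G : α → α → Prop) (S : Set α) : Set α :=
  {a | ∃ b ∈ S, G a b}

lemma subset_predSet (hG : ∀ a, G a a) : S ⊆ predSet G S :=
  fun a ha => ⟨a, ha, hG a⟩

lemma Relation.ReflTransGen.exists_edge_into {r v : α} (h : ReflTransGen G r v)
    (hr : r ∉ S) (hv : v ∈ S) : ∃ a ∉ S, ∃ b ∈ S, G a b := by
  induction h with
  | refl => exact absurd hv hr
  | @tail b c _ hbc ih =>
    by_cases hb : b ∈ S
    · exact ih hb
    · exact ⟨b, hb, c, hv, hbc⟩

lemma exists_mem_predSet_not_mem_of_root {r : α} (hroot : ∀ v, ReflTransGen G r v)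
    (hr : r ∉ S) (hS : S.Nonempty) : ∃ a ∈ predSet G S, a ∉ S := by
  obtain ⟨v, hv⟩ := hS
  obtain ⟨a, ha, b, hb, hab⟩ := (hroot v).exists_edge_into hr hv
  exact ⟨a, ⟨b, hb, hab⟩, ha⟩

lemma union_ssubset_predSet_union {r : α} (hG : ∀ a, G a a)
    (hroot : ∀ v, ReflTransGen G r v) (hS : S.Nonempty) (hT : T.Nonempty)
    (hdisj : Disjoint (predSet G S) (predSet G T)) :
    S ∪ T ⊂ predSet G S ∪ predSet G T := by
  refine Set.ssubset_iff_subset_ne.mpr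
    ⟨Set.union_subset_union (subset_predSet hG) (subset_predSet hG), fun heq => ?_⟩
  have hST : Disjoint S T := hdisj.mono (subset_predSet hG) (subset_predSet hG)
  obtain ⟨a, ha, haST⟩ : ∃ a ∈ predSet G S ∪ predSet G T, a ∉ S ∪ T := by
    by_cases hrS : r ∈ S
    · obtain ⟨a, ha, haT⟩ :=
        exists_mem_predSet_not_mem_of_root hroot (hST.notMem_of_mem_left hrS) hT
      exact ⟨a, .inr ha, fun h => h.elim
        (fun haS => hdisj.notMem_of_mem_right ha (subset_predSet hG haS)) haT⟩
    · obtain ⟨a, ha, haS⟩ := exists_mem_predSet_not_mem_of_root hroot hrS hS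
      exact ⟨a, .inl ha, fun h => h.elim haS
        (fun haT => hdisj.notMem_of_mem_left ha (subset_predSet hG haT))⟩
  exact haST (heq ▸ ha)

end PredSet

section InNbrs

variable {n : ℕ}

def inNbrs (l : List (Fin n → Fin n → Prop)) (i : Fin n) : Set (Fin n) :=
  {k | listProd l k i}

lemma inNbrs_nil (i : Fin n) : inNbrs [] i = {i} :=
  rfl

lemma inNbrs_cons (G : Fin n → Fin n → Prop) (l : List (Fin n → Fin n → Prop)) (i : Fin n) :
    inNbrs (G :: l) i = predSet G (inNbrs l i) := by
  ext k
  exact ⟨fun ⟨v, hkv, hv⟩ => ⟨v, hv, hkv⟩, fun ⟨v, hv, hkv⟩ => ⟨v, hkv, hv⟩⟩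

lemma mem_inNbrs_self {l : List (Fin n → Fin n → Prop)} (hself : ∀ G ∈ l, ∀ i, G i i)
    (i : Fin n) : i ∈ inNbrs l i := by
  induction l with
  | nil => rfl
  | cons G l ih =>
    rw [inNbrs_cons]
    exact subset_predSet (hself G List.mem_cons_self)
      (ih fun H hH => hself H (List.mem_cons_of_mem G hH))

lemma length_add_two_le_ncard_inNbrs_union {l : List (Fin n → Fin n → Prop)}
    (hself : ∀ G ∈ l, ∀ i, G i i) (hroot : ∀ G ∈ l, Rooted G) {i j : Fin n}
    (hdisj : Disjoint (inNbrs l i) (inNbrs l j)) :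
    l.length + 2 ≤ (inNbrs l i ∪ inNbrs l j).ncard := by
  induction l with
  | nil =>
    have hij : i ≠ j := fun h => Set.disjoint_singleton.mp hdisj h
    rw [List.length_nil, inNbrs_nil, inNbrs_nil, Set.singleton_union, Set.ncard_pair hij]
  | cons G l ih =>
    have hG : ∀ a, G a a := hself G List.mem_cons_self
    have hself' : ∀ H ∈ l, ∀ i, H i i := fun H hH => hself H (List.mem_cons_of_mem G hH)
    obtain ⟨r, hr⟩ := hroot G List.mem_cons_self
    rw [inNbrs_cons, inNbrs_cons] at hdisj ⊢
    have hold := ih hself' (fun H hH => hroot H (List.mem_cons_of_mem G hH))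
      (hdisj.mono (subset_predSet hG) (subset_predSet hG))
    have hgrow := Set.ncard_lt_ncard <| union_ssubset_predSet_union hG hr
      ⟨i, mem_inNbrs_self hself' i⟩ ⟨j, mem_inNbrs_self hself' j⟩ hdisj
    rw [List.length_cons]
    omega

end InNbrs

theorem prod_of_rooted_is_nonsplit_general {n : ℕ}
    (Gs : Fin (n - 1) → (Fin n → Fin n → Prop))
    (hself : ∀ m i, Gs m i i)
    (hrooted : ∀ m, Rooted (Gs m)) :
    ∀ i j, ∃ k, listProd (List.ofFn Gs) k i ∧ listProd (List.ofFn Gs) k j := by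
  intro i j
  by_contra hsplit
  have hdisj : Disjoint (inNbrs (List.ofFn Gs) i) (inNbrs (List.ofFn Gs) j) :=
    Set.disjoint_left.mpr fun k hki hkj => hsplit ⟨k, hki, hkj⟩
  have hcard := length_add_two_le_ncard_inNbrs_union
    (by simpa [List.forall_mem_ofFn_iff] using hself)
    (by simpa [List.forall_mem_ofFn_iff] using hrooted) hdisj
  have hle := Set.ncard_le_card (inNbrs (List.ofFn Gs) i ∪ inNbrs (List.ofFn Gs) j)
  rw [List.length_ofFn] at hcard
  rw [Nat.card_eq_fintype_card, Fintype.card_fin] at hle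
  have := i.pos
  omega

theorem prod_of_rooted_is_nonsplit {n : ℕ} (hn : 1 ≤ n)
    (Gs : Fin (n - 1) → (Fin n → Fin n → Prop))
    (hself : ∀ m i, Gs m i i)
    (hrooted : ∀ m, Rooted (Gs m)) :
    ∀ i j, ∃ k, listProd (List.ofFn Gs) k i ∧ listProd (List.ofFn Gs) k j :=
  prod_of_rooted_is_nonsplit_general Gs hself hrooted
end

section
/- A non-split directed graph (with self-loops) on n ≥ 1 vertices is rooted: if every pair of vertices has a common in-neighbor, then some vertex has a directed path to every vertex. -/
theorem nonsplit_is_rooted {n : ℕ} (hn : 1 ≤ n)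
    (G : Fin n → Fin n → Prop)
    (hself : ∀ i, G i i)
    (hnonsplit : ∀ i j, ∃ k, G k i ∧ G k j) :
    ∃ r, ∀ v, Relation.ReflTransGen G r v := by
  have key : ∀ s : Finset (Fin n), ∃ r, ∀ v ∈ s, Relation.ReflTransGen G r v := by
    intro s
    induction s using Finset.cons_induction with
    | empty => exact ⟨⟨0, hn⟩, fun v hv => absurd hv (Finset.notMem_empty v)⟩
    | cons a s' hnm ih =>
      obtain ⟨r, hr⟩ := ih
      obtain ⟨k, hk1, hk2⟩ := hnonsplit r a
      refine ⟨k, fun v hv => ?_⟩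
      rcases Finset.mem_cons.mp hv with h | h
      · exact h ▸ Relation.ReflTransGen.single hk2
      · exact (Relation.ReflTransGen.single hk1).trans (hr v h)
  obtain ⟨r, hr⟩ := key Finset.univ
  exact ⟨r, fun v => hr v (Finset.mem_univ v)⟩
end

section
/- Let n ≥ 3, f ≥ 1, f < n/2, and let N_A be the set of directed graphs on [n] (with self-loops) in which every vertex has in-degree at least n − f. Then for any G, H ∈ N_A there is a chain G = H₀, H₁, …, H_q = H of graphs in N_A with q ≤ ⌈n/f⌉ and graphs K₁, …, K_q ∈ N_A such that for each r, every vertex in the root set R(K_r) has identical in-neighborhoods in H_{r−1} and H_r. Concretely, taking In_i(H_r) = In_i(G) for i ≤ rf and In_i(H_r) = In_i(H) for i > rf, and In_i(K_r) = [n] \ {(r−1)f+1, …, rf}, these graphs lie in N_A and satisfy the conditions with R(K_r) ⊇ [n] \ {(r−1)f+1, …, rf}. -/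
/-!
Walk from `G` to `H` by switching the in-neighbourhoods of the vertices to those of `H` in
blocks of `f` consecutive vertices; `⌈n / f⌉` blocks cover all of `[n]`. While block `r` is being
switched, let the processes of that block crash: in the graph where nobody hears from them, a
crashed vertex reaches only itself, so it is not a root, and every root lies outside the block,
where the two consecutive graphs of the chain agree.
-/

open Finset

/-- A vertex `r` is a root of the graph given by in-neighborhoods `In`:
it has a directed path to every vertex (edge from `a` to `b` iff `a ∈ In b`). -/
def IsRoot {n : ℕ} (In : Fin n → Finset (Fin n)) (r : Fin n) : Prop :=
  ∀ v, Relation.ReflTransGen (fun a b => a ∈ In b) r v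

lemma Nat.le_ceil_div_mul {K : Type*} [Field K] [LinearOrder K] [IsStrictOrderedRing K]
    [FloorSemiring K] {n f : ℕ} (hf : 0 < f) : n ≤ ⌈(n : K) / f⌉₊ * f := by
  have h := Nat.le_ceil ((n : K) / f)
  rw [div_le_iff₀ (by exact_mod_cast hf)] at h
  exact_mod_cast h

section Graphs

variable {n : ℕ}

lemma IsRoot.eq_of_forall_mem_imp_eq {In : Fin n → Finset (Fin n)} {r : Fin n}
    (hr : IsRoot In r) (hout : ∀ b, r ∈ In b → b = r) (v : Fin n) : v = r := by
  induction hr v with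
  | refl => rfl
  | tail _ hedge ih =>
    rw [ih] at hedge
    exact hout _ hedge

def indexIco (n a b : ℕ) : Finset (Fin n) := univ.filter fun j => j.val ∈ Ico a b

lemma card_indexIco_le (a b : ℕ) : #(indexIco n a b) ≤ b - a := by
  calc #(indexIco n a b) ≤ #(Ico a b) :=
        card_le_card_of_injOn Fin.val (fun j hj => (mem_filter.mp hj).2) Fin.val_injective.injOn
    _ = b - a := Nat.card_Ico a b

/-- The processes of `S` have crashed: every vertex hears from itself and from all processes
outside `S`. The paper's `K_r` is `crashGraph` of the `r`-th block. -/
def crashGraph (S : Finset (Fin n)) (i : Fin n) : Finset (Fin n) := insert i Sᶜ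

lemma self_mem_crashGraph (S : Finset (Fin n)) (i : Fin n) : i ∈ crashGraph S i :=
  mem_insert_self i Sᶜ

lemma sub_le_card_crashGraph {S : Finset (Fin n)} {f : ℕ} (hS : #S ≤ f) (i : Fin n) :
    n - f ≤ #(crashGraph S i) :=
  calc n - f ≤ n - #S := Nat.sub_le_sub_left hS n
    _ = #Sᶜ := by rw [card_compl, Fintype.card_fin]
    _ ≤ #(crashGraph S i) := card_le_card (subset_insert i Sᶜ)

lemma not_isRoot_crashGraph [Nontrivial (Fin n)] {S : Finset (Fin n)} {i : Fin n} (hi : i ∈ S) :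
    ¬ IsRoot (crashGraph S) i := by
  intro hroot
  have hout : ∀ b, i ∈ crashGraph S b → b = i := fun b hb =>
    ((mem_insert.mp hb).resolve_right (notMem_compl.mpr hi)).symm
  obtain ⟨v, hv⟩ := exists_ne i
  exact hv (hroot.eq_of_forall_mem_imp_eq hout v)

/-- The paper's `H_r` is `splice G H (r * f)` (vertices are `0`-based here). -/
def splice (G H : Fin n → Finset (Fin n)) (k : ℕ) (i : Fin n) : Finset (Fin n) :=
  if i.val < k then H i else G i

variable {G H : Fin n → Finset (Fin n)}

lemma splice_zero : splice G H 0 = G := by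
  funext i
  simp [splice]

lemma splice_of_le {k : ℕ} (hk : n ≤ k) : splice G H k = H := by
  funext i
  simp [splice, i.isLt.trans_le hk]

lemma splice_prop {P : Fin n → Finset (Fin n) → Prop} (hG : ∀ i, P i (G i)) (hH : ∀ i, P i (H i))
    (k : ℕ) (i : Fin n) : P i (splice G H k i) := by
  unfold splice
  split_ifs
  exacts [hH i, hG i]

lemma splice_eq_splice_of_notMem_indexIco {a b : ℕ} (hab : a ≤ b) {i : Fin n}
    (hi : i ∉ indexIco n a b) : splice G H a i = splice G H b i := by
  simp only [indexIco, mem_filter, mem_univ, mem_Ico, true_and, not_and, not_lt] at hi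
  by_cases ha : i.val < a
  · simp [splice, ha, ha.trans_le hab]
  · simp [splice, ha, hi (not_lt.mp ha)]

end Graphs

theorem alpha_diameter_crash_model_general {n f : ℕ} (hn : 3 ≤ n) (hf : 1 ≤ f)
    (G H : Fin n → Finset (Fin n))
    (hGself : ∀ i, i ∈ G i) (hHself : ∀ i, i ∈ H i)
    (hGdeg : ∀ i, n - f ≤ (G i).card) (hHdeg : ∀ i, n - f ≤ (H i).card) :
    ∃ q : ℕ, q ≤ ⌈(n : ℚ) / f⌉₊ ∧
      ∃ Hs : Fin (q + 1) → (Fin n → Finset (Fin n)),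
      ∃ Ks : Fin q → (Fin n → Finset (Fin n)),
        Hs 0 = G ∧ Hs (Fin.last q) = H ∧
        (∀ r i, i ∈ Hs r i ∧ n - f ≤ (Hs r i).card) ∧
        (∀ r i, i ∈ Ks r i ∧ n - f ≤ (Ks r i).card) ∧
        (∀ r : Fin q, ∀ i : Fin n, IsRoot (Ks r) i → Hs r.castSucc i = Hs r.succ i) := by
  have : Nontrivial (Fin n) := Fin.nontrivial_iff_two_le.mpr (by omega)
  have hblock (r : ℕ) : #(indexIco n (r * f) ((r + 1) * f)) ≤ f := by
    simpa [Nat.succ_mul] using card_indexIco_le (n := n) (r * f) ((r + 1) * f)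
  refine ⟨_, le_rfl, fun r => splice G H (r * f),
    fun r => crashGraph (indexIco n (r * f) ((r + 1) * f)), by simpa using splice_zero,
    splice_of_le (Nat.le_ceil_div_mul hf), fun r i => ?_, fun r i => ?_, fun r i hroot => ?_⟩
  · exact splice_prop (P := fun i s => i ∈ s ∧ n - f ≤ #s) (fun i => ⟨hGself i, hGdeg i⟩)
      (fun i => ⟨hHself i, hHdeg i⟩) _ i
  · exact ⟨self_mem_crashGraph _ i, sub_le_card_crashGraph (hblock r) i⟩
  · exact splice_eq_splice_of_notMem_indexIco (Nat.mul_le_mul_right f r.val.le_succ)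
      fun hi => not_isRoot_crashGraph hi hroot

theorem alpha_diameter_crash_model {n f : ℕ} (hn : 3 ≤ n) (hf : 1 ≤ f) (hfn : 2 * f < n)
    (G H : Fin n → Finset (Fin n))
    (hGself : ∀ i, i ∈ G i) (hHself : ∀ i, i ∈ H i)
    (hGdeg : ∀ i, n - f ≤ (G i).card) (hHdeg : ∀ i, n - f ≤ (H i).card) :
    ∃ q : ℕ, q ≤ ⌈(n : ℚ) / f⌉₊ ∧
      ∃ Hs : Fin (q + 1) → (Fin n → Finset (Fin n)),
      ∃ Ks : Fin q → (Fin n → Finset (Fin n)),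
        Hs 0 = G ∧ Hs (Fin.last q) = H ∧
        (∀ r i, i ∈ Hs r i ∧ n - f ≤ (Hs r i).card) ∧
        (∀ r i, i ∈ Ks r i ∧ n - f ≤ (Ks r i).card) ∧
        (∀ r : Fin q, ∀ i : Fin n, IsRoot (Ks r) i → Hs r.castSucc i = Hs r.succ i) :=
  alpha_diameter_crash_model_general hn hf G H hGself hHself hGdeg hHdeg
end
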